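/- arXiv:1206.5074 — 2 statements merged into one kernel-verified Lean document; each statement's English description precedes it below -/
import Mathlib

section
/- Let μ be a Borel measure on an interval [a,b] ⊆ ℝ and let φ, ψ : [a,b] → (0,∞). Then sup over pairs x ≤ y of μ[x,y]/(φ(x)+ψ(y)) is at least sup over θ ∈ [a,b] of min( sup_{x ≤ θ} μ[x,θ]/φ(x), sup_{y ≥ θ} μ(θ,y]/ψ(y) ). -/
open MeasureTheory Set ENNReal

/-!
For `x ≤ θ ≤ y` the interval `[x, y]` splits as `[x, θ] ∪ (θ, y]`, so `μ[x, y]` is the sum of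
the two numerators; by the mediant inequality `min (A / p) (B / q) ≤ (A + B) / (p + q)`, and
`ofReal (φ x + ψ y) ≤ ofReal (φ x) + ofReal (ψ y)` only enlarges the right-hand ratio.
-/

theorem ENNReal.min_div_le_add_div_add (a b c d : ℝ≥0∞) :
    min (a / c) (b / d) ≤ (a + b) / (c + d) := by
  rcases eq_or_ne c ∞ with rfl | hc
  · simp
  rcases eq_or_ne d ∞ with rfl | hd
  · simp
  rcases eq_or_ne (a + b) 0 with hab | hab
  · obtain ⟨rfl, rfl⟩ := add_eq_zero.1 hab
    simp
  rw [ENNReal.le_div_iff_mul_le (Or.inr hab) (Or.inl (add_ne_top.2 ⟨hc, hd⟩)), mul_add]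
  exact add_le_add (mul_le_of_le_div (min_le_left _ _)) (mul_le_of_le_div (min_le_right _ _))

theorem MeasureTheory.measure_Icc_eq_add_Ioc {α : Type*} [LinearOrder α] [TopologicalSpace α]
    [MeasurableSpace α] [OpensMeasurableSpace α] [OrderClosedTopology α] (μ : Measure α)
    {x θ y : α} (hxθ : x ≤ θ) (hθy : θ ≤ y) :
    μ (Icc x y) = μ (Icc x θ) + μ (Ioc θ y) := by
  rw [← Icc_union_Ioc_eq_Icc hxθ hθy, measure_union _ measurableSet_Ioc]
  exact disjoint_left.2 fun _ hz hz' => hz'.1.not_ge hz.2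

theorem sup_ratio_lower_bound_general (μ : Measure ℝ) (a b : ℝ) (φ ψ : ℝ → ℝ) :
    (⨆ θ ∈ Icc a b,
        min (⨆ x ∈ Icc a θ, μ (Icc x θ) / ENNReal.ofReal (φ x))
            (⨆ y ∈ Icc θ b, μ (Ioc θ y) / ENNReal.ofReal (ψ y)))
      ≤ ⨆ x ∈ Icc a b, ⨆ y ∈ Icc x b, μ (Icc x y) / ENNReal.ofReal (φ x + ψ y) := by
  refine iSup₂_le fun θ hθ => ?_
  simp only [iSup_inf_eq, inf_iSup_eq]
  refine iSup₂_le fun y hy => iSup₂_le fun x hx => ?_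
  refine le_iSup₂_of_le x ⟨hx.1, hx.2.trans hθ.2⟩ <|
    le_iSup₂_of_le y ⟨hx.2.trans hy.1, hy.2⟩ ?_
  calc min (μ (Icc x θ) / ENNReal.ofReal (φ x)) (μ (Ioc θ y) / ENNReal.ofReal (ψ y))
      ≤ (μ (Icc x θ) + μ (Ioc θ y)) / (ENNReal.ofReal (φ x) + ENNReal.ofReal (ψ y)) :=
        ENNReal.min_div_le_add_div_add _ _ _ _
    _ ≤ μ (Icc x y) / ENNReal.ofReal (φ x + ψ y) := by
        rw [← measure_Icc_eq_add_Ioc μ hx.2 hy.1]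
        exact ENNReal.div_le_div_left ofReal_add_le _

theorem sup_ratio_lower_bound (μ : Measure ℝ) (a b : ℝ) (φ ψ : ℝ → ℝ)
    (hφ : ∀ x ∈ Icc a b, 0 < φ x) (hψ : ∀ x ∈ Icc a b, 0 < ψ x) :
    (⨆ θ ∈ Icc a b,
        min (⨆ x ∈ Icc a θ, μ (Icc x θ) / ENNReal.ofReal (φ x))
            (⨆ y ∈ Icc θ b, μ (Ioc θ y) / ENNReal.ofReal (ψ y)))
      ≤ ⨆ x ∈ Icc a b, ⨆ y ∈ Icc x b, μ (Icc x y) / ENNReal.ofReal (φ x + ψ y) :=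
  sup_ratio_lower_bound_general μ a b φ ψ
end

section
/- Let μ(dx) = e^{−bx} dx with b > 0 on (0,∞) and p > 1. Define H(x) = (1 − e^{−x})^{1/p} ((1 − e^{−x})^{−1/(p−1)} − e^{x/(p−1)})^{(p−1)/p} for x ∈ (0, log 2]. Then sup_{x ∈ (0, log 2]} H(x) = 1, and moreover lim_{x→0⁺} H(x) = 1. -/
/-!
Write `u = 1 - e^{-x}` and `s = e^{-x}`, so that `e^{x/(p-1)} = s^{-1/(p-1)}` and `u / s = e^x - 1`.
Factoring `u^{-1/(p-1)}` out of the bracket cancels the prefactor `u^{1/p}` and leaves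
`H(x) = (1 - (e^x - 1)^{1/(p-1)})^{(p-1)/p}` on `(0, log 2]`, where `0 < e^x - 1 ≤ 1`.
This is at most `1` and tends to `1` as `x → 0⁺`, so the supremum is `1`.
-/

open Set Filter Topology Real

theorem csSup_image_eq_of_tendsto {α : Type*} {l : Filter α} [l.NeBot] {f : α → ℝ} {S : Set α}
    {a : ℝ} (hS : S ∈ l) (hle : ∀ x ∈ S, f x ≤ a) (hf : Tendsto f l (𝓝 a)) :
    sSup (f '' S) = a := by
  have hbdd : BddAbove (f '' S) := ⟨a, forall_mem_image.2 hle⟩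
  refine le_antisymm (csSup_le ((Filter.nonempty_of_mem hS).image f) (forall_mem_image.2 hle)) ?_
  exact le_of_tendsto hf (eventually_of_mem hS fun x hx => le_csSup hbdd (mem_image_of_mem f hx))

theorem rpow_mul_mul_rpow_neg_sub_rpow_neg {u s c q : ℝ} (hu : 0 < u) (hs : 0 < s) (hc : 0 ≤ c)
    (hus : u ≤ s) :
    u ^ (c * q) * (u ^ (-c) - s ^ (-c)) ^ q = (1 - (u / s) ^ c) ^ q := by
  have hsplit : u ^ (-c) - s ^ (-c) = u ^ (-c) * (1 - (u / s) ^ c) := by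
    rw [div_rpow hu.le hs.le, rpow_neg hu.le, rpow_neg hs.le]
    field_simp
  have hdiff : 0 ≤ 1 - (u / s) ^ c :=
    sub_nonneg.2 (rpow_le_one (by positivity) ((div_le_one hs).2 hus) hc)
  rw [hsplit, mul_rpow (by positivity) hdiff, ← mul_assoc, ← rpow_mul hu.le, ← rpow_add hu]
  simp

theorem one_sub_rpow_rpow_le_one {t c q : ℝ} (ht₀ : 0 ≤ t) (ht₁ : t ≤ 1) (hc : 0 ≤ c)
    (hq : 0 ≤ q) : (1 - t ^ c) ^ q ≤ 1 := by
  have htc : t ^ c ≤ 1 := rpow_le_one ht₀ ht₁ hc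
  exact rpow_le_one (by linarith) (by linarith [rpow_nonneg ht₀ c]) hq

theorem tendsto_one_sub_exp_sub_one_rpow_rpow {c : ℝ} (hc : 0 < c) (q : ℝ) :
    Tendsto (fun x => (1 - (exp x - 1) ^ c) ^ q) (𝓝 0) (𝓝 1) := by
  have hcont : ContinuousAt (fun x => (1 - (exp x - 1) ^ c) ^ q) 0 := by
    refine ContinuousAt.rpow_const (ContinuousAt.sub continuousAt_const ?_) (Or.inl ?_)
    · exact (continuous_exp.sub continuous_const).continuousAt.rpow_const (Or.inr hc.le)
    · simp [zero_rpow hc.ne']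
  simpa [zero_rpow hc.ne'] using hcont.tendsto

theorem exp_sub_one_mem_Ioc {x : ℝ} (hx : x ∈ Ioc 0 (log 2)) : exp x - 1 ∈ Ioc 0 1 := by
  have h₁ : 1 < exp x := one_lt_exp_iff.2 hx.1
  have h₂ : exp x ≤ 2 := (exp_le_exp.2 hx.2).trans_eq (exp_log two_pos)
  constructor <;> linarith

theorem exponential_Ho_eq {p x : ℝ} (hp : 1 < p) (hx : x ∈ Ioc 0 (log 2)) :
    (1 - exp (-x)) ^ (1 / p) * ((1 - exp (-x)) ^ (-(1 / (p - 1))) - exp (x / (p - 1)))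
        ^ ((p - 1) / p) = (1 - (exp x - 1) ^ (1 / (p - 1))) ^ ((p - 1) / p) := by
  have hp₁ : 0 < p - 1 := by linarith
  have hu : 0 < 1 - exp (-x) := by linarith [exp_lt_one_iff.2 (neg_lt_zero.2 hx.1)]
  have hratio : (1 - exp (-x)) / exp (-x) = exp x - 1 := by
    rw [exp_neg]; field_simp
  have hus : 1 - exp (-x) ≤ exp (-x) := by
    rw [← div_le_one (exp_pos _), hratio]; exact (exp_sub_one_mem_Ioc hx).2
  have hs : exp (x / (p - 1)) = exp (-x) ^ (-(1 / (p - 1))) := by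
    rw [← exp_mul]; ring_nf
  have hexponent : 1 / p = 1 / (p - 1) * ((p - 1) / p) := by
    field_simp
  rw [hs, hexponent, rpow_mul_mul_rpow_neg_sub_rpow_neg hu (exp_pos _) (by positivity) hus,
    hratio]

theorem example_exponential_Ho_general (p : ℝ) (hp : 1 < p) :
    let H : ℝ → ℝ := fun x => (1 - Real.exp (-x)) ^ (1 / p)
        * ((1 - Real.exp (-x)) ^ (-(1 / (p - 1))) - Real.exp (x / (p - 1))) ^ ((p - 1) / p)
    sSup (H '' Ioc (0:ℝ) (Real.log 2)) = 1 ∧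
    Tendsto H (nhdsWithin 0 (Ioi 0)) (nhds 1) := by
  intro H
  have hp₁ : 0 < p - 1 := by linarith
  have hS : Ioc 0 (log 2) ∈ 𝓝[>] (0 : ℝ) :=
    Ioc_mem_nhdsGT_of_mem ⟨le_rfl, log_pos one_lt_two⟩
  have hH : Tendsto H (𝓝[>] 0) (𝓝 1) :=
    ((tendsto_one_sub_exp_sub_one_rpow_rpow (by positivity) _).mono_left
      nhdsWithin_le_nhds).congr' (eventuallyEq_of_mem hS fun x hx => (exponential_Ho_eq hp hx).symm)
  refine ⟨csSup_image_eq_of_tendsto hS (fun x hx => ?_) hH, hH⟩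
  rw [show H x = _ from exponential_Ho_eq hp hx]
  exact one_sub_rpow_rpow_le_one (exp_sub_one_mem_Ioc hx).1.le (exp_sub_one_mem_Ioc hx).2
    (by positivity) (by positivity)

theorem example_exponential_Ho (b p : ℝ) (hb : 0 < b) (hp : 1 < p) :
    let H : ℝ → ℝ := fun x => (1 - Real.exp (-x)) ^ (1 / p)
        * ((1 - Real.exp (-x)) ^ (-(1 / (p - 1))) - Real.exp (x / (p - 1))) ^ ((p - 1) / p)
    sSup (H '' Ioc (0:ℝ) (Real.log 2)) = 1 ∧
    Tendsto H (nhdsWithin 0 (Ioi 0)) (nhds 1) :=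
  example_exponential_Ho_general p hp
end
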